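/- arXiv:1812.03328 — 3 statements merged into one kernel-verified Lean document; each statement's English description precedes it below -/
import Mathlib

section
/- For every strict partition λ = (λ_1 > ... > λ_r > 0) with r ≤ n, the universal factorial Schur functions P^L_λ(x_1,...,x_n|b) and Q^L_λ(x_1,...,x_n|b) are well defined elements of L[[b]][[x_1,...,x_n]]: although each summand involves the denominators x_i +_F \bar{x}_j, the full symmetrized sums (1/(n−r)!) Σ_{w∈S_n} w[ [x|b]^λ ∏_{i=1}^r ∏_{j=i+1}^n (x_i +_F x_j)/(x_i +_F \bar{x}_j) ] and (1/(n−r)!) Σ_{w∈S_n} w[ [[x|b]]^λ ∏_{i=1}^r ∏_{j=i+1}^n (x_i +_F x_j)/(x_i +_F \bar{x}_j) ] are formal power series in x_1,...,x_n with coefficients in L[[b]]. -/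
/- ## Formal group laws, coefficientwise substitution, universal Schur P,Q-functions -/

noncomputable section

open Finset MvPowerSeries

/-- Substitution of two power series (with zero constant term) into a two-variable
series `∑ a i j * u^i * v^j`, computed coefficientwise. -/
def fadd {L : Type} [CommRing L] {σ : Type} (a : ℕ → ℕ → L)
    (X Y : MvPowerSeries σ L) : MvPowerSeries σ L :=
  fun d => ∑ p ∈ Finset.range ((d.sum fun _ n => n) + 1) ×ˢ
      Finset.range ((d.sum fun _ n => n) + 1),
    a p.1 p.2 * MvPowerSeries.coeff (R := L) d (X ^ p.1 * Y ^ p.2)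

/-- Substitution of a power series (with zero constant term) into a one-variable
series `∑ c k * u^k`, computed coefficientwise. -/
def fsub1 {L : Type} [CommRing L] {σ : Type} (c : ℕ → L)
    (X : MvPowerSeries σ L) : MvPowerSeries σ L :=
  fun d => ∑ k ∈ Finset.range ((d.sum fun _ n => n) + 1),
    c k * MvPowerSeries.coeff (R := L) d (X ^ k)

/-- Substitution `x_i ↦ v i` in a multivariate power series, computed coefficientwise;
meaningful when every `v i` has zero constant term. -/
def msubst {L : Type} [CommRing L] {σ τ : Type} (v : σ → MvPowerSeries τ L)
    (f : MvPowerSeries σ L) : MvPowerSeries τ L :=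
  fun d => ∑ᶠ e : σ →₀ ℕ,
    MvPowerSeries.coeff (R := L) e f * MvPowerSeries.coeff (R := L) d (e.prod fun i k => v i ^ k)

/-- A one-dimensional commutative formal group law over `L` together with its
formal inverse series; the axioms are stated for substitution of arbitrary
power series with zero constant term. -/
structure FGL (L : Type) [CommRing L] where
  /-- the coefficients `a i j` of `F(u,v) = ∑ a i j · u^i v^j` -/
  a : ℕ → ℕ → L
  /-- the coefficients of the formal inverse `χ(u) = ∑ ch k · u^k` -/
  ch : ℕ → L
  ch_zero : ch 0 = 0
  add_zero' : ∀ {σ : Type} (X : MvPowerSeries σ L),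
    MvPowerSeries.constantCoeff (σ := σ) (R := L) X = 0 → fadd a X 0 = X
  comm' : ∀ {σ : Type} (X Y : MvPowerSeries σ L),
    MvPowerSeries.constantCoeff (σ := σ) (R := L) X = 0 → MvPowerSeries.constantCoeff (σ := σ) (R := L) Y = 0 →
      fadd a X Y = fadd a Y X
  assoc' : ∀ {σ : Type} (X Y Z : MvPowerSeries σ L),
    MvPowerSeries.constantCoeff (σ := σ) (R := L) X = 0 → MvPowerSeries.constantCoeff (σ := σ) (R := L) Y = 0 →
      MvPowerSeries.constantCoeff (σ := σ) (R := L) Z = 0 →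
      fadd a (fadd a X Y) Z = fadd a X (fadd a Y Z)
  add_inv' : ∀ {σ : Type} (X : MvPowerSeries σ L),
    MvPowerSeries.constantCoeff (σ := σ) (R := L) X = 0 → fadd a X (fsub1 ch X) = 0

/-- The formal inverse `X ↦ \bar X` associated to a formal group law. -/
def FGL.neg {L : Type} [CommRing L] (G : FGL L) {σ : Type}
    (X : MvPowerSeries σ L) : MvPowerSeries σ L := fsub1 G.ch X

variable {L : Type} [CommRing L] {σ : Type}

/-- `[t|b]^k = ∏_{i=1}^k (t +_F b_i)` (here `bs i` stands for `b_{i+1}`). -/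
def facPow (G : FGL L) (t : MvPowerSeries σ L) (bs : ℕ → MvPowerSeries σ L) (k : ℕ) :
    MvPowerSeries σ L :=
  ∏ i ∈ Finset.range k, fadd G.a t (bs i)

/-- `[[t|b]]^k`: `[[t|b]]^0 = 1` and `[[t|b]]^k = (t +_F t)·[t|b]^{k-1}` for `k ≥ 1`. -/
def facPowQ (G : FGL L) (t : MvPowerSeries σ L) (bs : ℕ → MvPowerSeries σ L) :
    ℕ → MvPowerSeries σ L
  | 0 => 1
  | (k + 1) => fadd G.a t t * facPow G t bs k

instance mvPowerSeries_isDomain [IsDomain L] : IsDomain (MvPowerSeries σ L) :=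
  NoZeroDivisors.to_isDomain _

/-- `lam` is a strict partition (written with trailing zeros): entries strictly
decrease until they reach `0`. -/
def IsSP {n : ℕ} (lam : Fin n → ℕ) : Prop :=
  ∀ i j : Fin n, i < j → (lam j < lam i ∨ (lam i = 0 ∧ lam j = 0))

/-- The length (number of nonzero parts) of a partition written with trailing zeros. -/
def spLen {n : ℕ} (lam : Fin n → ℕ) : ℕ :=
  (Finset.univ.filter fun i => lam i ≠ 0).card

variable [IsDomain L] [CharZero L]

/-- The universal factorial Schur P-function
`P^L_λ(x_1,…,x_n|b) = (1/(n-r)!) ∑_{w∈S_n} w[ [x|b]^λ ∏_{i=1}^r ∏_{j=i+1}^n (x_i +_F x_j)/(x_i +_F \bar x_j) ]`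
(for a strict partition `λ` of length `r ≤ n`), as an element of the fraction field
of the power series ring. -/
def PLgen (G : FGL L) (n r : ℕ) (lam : Fin n → ℕ) (x : Fin n → MvPowerSeries σ L)
    (bs : ℕ → MvPowerSeries σ L) : FractionRing (MvPowerSeries σ L) :=
  (((n - r).factorial : FractionRing (MvPowerSeries σ L)))⁻¹ *
    ∑ w : Equiv.Perm (Fin n),
      (algebraMap (MvPowerSeries σ L) (FractionRing (MvPowerSeries σ L))
        ((∏ i : Fin n, facPow G (x (w i)) bs (lam i)) *
          ∏ i ∈ Finset.univ.filter (fun i : Fin n => (i : ℕ) < r), ∏ j ∈ Finset.Ioi i,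
            fadd G.a (x (w i)) (x (w j)))) /
      (algebraMap (MvPowerSeries σ L) (FractionRing (MvPowerSeries σ L))
        (∏ i ∈ Finset.univ.filter (fun i : Fin n => (i : ℕ) < r), ∏ j ∈ Finset.Ioi i,
          fadd G.a (x (w i)) (G.neg (x (w j)))))

/-- The universal factorial Schur Q-function, defined like `PLgen` with
`[[x|b]]^λ` in place of `[x|b]^λ`. -/
def QLgen (G : FGL L) (n r : ℕ) (lam : Fin n → ℕ) (x : Fin n → MvPowerSeries σ L)
    (bs : ℕ → MvPowerSeries σ L) : FractionRing (MvPowerSeries σ L) :=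
  (((n - r).factorial : FractionRing (MvPowerSeries σ L)))⁻¹ *
    ∑ w : Equiv.Perm (Fin n),
      (algebraMap (MvPowerSeries σ L) (FractionRing (MvPowerSeries σ L))
        ((∏ i : Fin n, facPowQ G (x (w i)) bs (lam i)) *
          ∏ i ∈ Finset.univ.filter (fun i : Fin n => (i : ℕ) < r), ∏ j ∈ Finset.Ioi i,
            fadd G.a (x (w i)) (x (w j)))) /
      (algebraMap (MvPowerSeries σ L) (FractionRing (MvPowerSeries σ L))
        (∏ i ∈ Finset.univ.filter (fun i : Fin n => (i : ℕ) < r), ∏ j ∈ Finset.Ioi i,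
          fadd G.a (x (w i)) (G.neg (x (w j)))))

/-- `s^L_λ(x_1,…,x_n|b) = ∑_{w∈S_n} w[ [x|b]^{λ+ρ_{n-1}} / ∏_{i<j} (x_i +_F \bar x_j) ]`. -/
def sLgen (G : FGL L) (n : ℕ) (lam : Fin n → ℕ) (x : Fin n → MvPowerSeries σ L)
    (bs : ℕ → MvPowerSeries σ L) : FractionRing (MvPowerSeries σ L) :=
  ∑ w : Equiv.Perm (Fin n),
    (algebraMap (MvPowerSeries σ L) (FractionRing (MvPowerSeries σ L))
      (∏ i : Fin n, facPow G (x (w i)) bs (lam i + (n - 1 - (i : ℕ))))) /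
    (algebraMap (MvPowerSeries σ L) (FractionRing (MvPowerSeries σ L))
      (∏ i : Fin n, ∏ j ∈ Finset.Ioi i, fadd G.a (x (w i)) (G.neg (x (w j)))))

end

/-!
Each denominator factor `x_i +_F \bar x_j` is `x_i - x_j` times a unit: it vanishes under the
substitution `x_j ↦ x_i`, and its linear part is `x_i - x_j`. Hence the denominator of a summand
divides the Vandermonde product `V`, and the symmetrized sum equals `(∑_w sgn(w) · w(C)) / V` for a
single power series `C`. The terms `sgn(w) · w(C)` only depend on the coset of `w` modulo the
permutations fixing the first `r` letters, so the numerator is `(n - r)!` times a sum over cosets.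
That sum is alternating, and `V` divides every alternating power series because the `x_i - x_j`
are pairwise non-associate primes: `x_i - x_j` divides `f` exactly when `f` vanishes under
`x_j ↦ x_i`.
-/

noncomputable section

open Finset MvPowerSeries Filter

section Substitution

variable {L : Type} [CommRing L] {σ τ : Type}

theorem rename_fadd (f : σ → τ) [TendstoCofinite f] (a : ℕ → ℕ → L) (X Y : MvPowerSeries σ L) :
    rename f (fadd a X Y) = fadd a (rename f X) (rename f Y) := by
  ext d
  rw [coeff_rename]
  change _ = ∑ p ∈ range (d.degree + 1) ×ˢ range (d.degree + 1), a p.1 p.2 *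
    coeff d (rename f X ^ p.1 * rename f Y ^ p.2)
  simp_rw [← map_pow, ← map_mul, coeff_rename, mul_sum]
  rw [sum_comm]
  refine sum_congr rfl fun e he => ?_
  have hdeg : e.degree = d.degree := by
    rw [Set.Finite.mem_toFinset, Set.mem_preimage, Set.mem_singleton_iff] at he
    rw [← he, Finsupp.degree_mapDomain]
  change ∑ p ∈ range (e.degree + 1) ×ˢ range (e.degree + 1), _ = _
  rw [hdeg]

theorem rename_fsub1 (f : σ → τ) [TendstoCofinite f] (c : ℕ → L) (X : MvPowerSeries σ L) :
    rename f (fsub1 c X) = fsub1 c (rename f X) := by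
  ext d
  rw [coeff_rename]
  change _ = ∑ k ∈ range (d.degree + 1), c k * coeff d (rename f X ^ k)
  simp_rw [← map_pow, coeff_rename, mul_sum]
  rw [sum_comm]
  refine sum_congr rfl fun e he => ?_
  have hdeg : e.degree = d.degree := by
    rw [Set.Finite.mem_toFinset, Set.mem_preimage, Set.mem_singleton_iff] at he
    rw [← he, Finsupp.degree_mapDomain]
  change ∑ k ∈ range (e.degree + 1), _ = _
  rw [hdeg]

theorem coeff_single_fsub1 (c : ℕ → L) (X : MvPowerSeries σ L) (s : σ) :
    coeff (Finsupp.single s 1) (fsub1 c X) = c 1 * coeff (Finsupp.single s 1) X := by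
  classical
  change ∑ k ∈ range ((Finsupp.single s 1).degree + 1), c k * coeff _ (X ^ k) = _
  simp [sum_range_succ, coeff_one]

theorem coeff_single_fadd (a : ℕ → ℕ → L) {X Y : MvPowerSeries σ L}
    (hX : constantCoeff X = 0) (hY : constantCoeff Y = 0) (s : σ) :
    coeff (Finsupp.single s 1) (fadd a X Y) =
      a 1 0 * coeff (Finsupp.single s 1) X + a 0 1 * coeff (Finsupp.single s 1) Y := by
  classical
  have hXY : coeff (Finsupp.single s 1) (X * Y) = 0 :=
    coeff_of_lt_order <| calc
      (((Finsupp.single s 1 : σ →₀ ℕ).degree : ℕ) : ℕ∞) < 1 + 1 := by norm_num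
      _ ≤ X.order + Y.order := add_le_add (one_le_order_iff_constCoeff_eq_zero.mpr hX)
          (one_le_order_iff_constCoeff_eq_zero.mpr hY)
      _ ≤ (X * Y).order := le_order_mul
  change ∑ p ∈ range ((Finsupp.single s 1).degree + 1) ×ˢ range ((Finsupp.single s 1).degree + 1),
    a p.1 p.2 * coeff _ (X ^ p.1 * Y ^ p.2) = _
  simp [sum_product, sum_range_succ, coeff_one, hXY]
  ring

end Substitution

namespace FGL

variable {L : Type} [CommRing L] (G : FGL L) {σ : Type}

theorem a_one_zero : G.a 1 0 = 1 := by
  classical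
  have h := congrArg (coeff (Finsupp.single () 1))
    (G.add_zero' (X () : MvPowerSeries Unit L) (constantCoeff_X ()))
  rwa [coeff_single_fadd G.a (constantCoeff_X ()) (map_zero _), coeff_X, if_pos rfl, map_zero,
    mul_zero, add_zero, mul_one] at h

theorem constantCoeff_neg (X : MvPowerSeries σ L) : constantCoeff (G.neg X) = 0 := by
  change ∑ k ∈ range ((0 : σ →₀ ℕ).degree + 1), G.ch k * coeff 0 (X ^ k) = 0
  simp [G.ch_zero]

theorem rename_neg {τ : Type} (f : σ → τ) [TendstoCofinite f] (X : MvPowerSeries σ L) :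
    rename f (G.neg X) = G.neg (rename f X) :=
  rename_fsub1 f G.ch X

end FGL

theorem Finsupp.mapDomain_update_id {σ : Type*} [DecidableEq σ] (u v : σ) (e : σ →₀ ℕ) :
    Finsupp.mapDomain (Function.update id v u) e = e.erase v + Finsupp.single u (e v) := by
  conv_lhs => rw [← Finsupp.erase_add_single v e]
  rw [Finsupp.mapDomain_add, Finsupp.mapDomain_single, Function.update_self,
    Finsupp.mapDomain_congr (g := id), Finsupp.mapDomain_id]
  intro x hx
  rw [Function.update_of_ne (by rintro rfl; simp at hx)]

theorem Finsupp.mapDomain_update_id_eq_iff {σ : Type*} [DecidableEq σ] {u v : σ} (huv : u ≠ v)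
    {d : σ →₀ ℕ} (hd : d u = 0) (e : σ →₀ ℕ) :
    Finsupp.mapDomain (Function.update id v u) e = Finsupp.mapDomain (Function.update id v u) d ↔
      e u + e v = d v ∧ ∀ w, w ≠ u → w ≠ v → e w = d w := by
  simp only [Finsupp.mapDomain_update_id, Finsupp.ext_iff, Finsupp.add_apply, Finsupp.erase_apply,
    Finsupp.single_apply]
  constructor
  · intro h
    refine ⟨by simpa [huv, hd] using h u, fun w hwu hwv => by simpa [hwv, Ne.symm hwu] using h w⟩
  · rintro ⟨h1, h2⟩ w
    by_cases hwv : w = v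
    · simp [hwv, huv]
    · by_cases hwu : w = u
      · subst hwu; simp [hwv, hd, h1]
      · simp [hwv, Ne.symm hwu, h2 w hwu hwv]

namespace MvPowerSeries

instance instCharZero {σ R : Type*} [Semiring R] [CharZero R] : CharZero (MvPowerSeries σ R) :=
  RingHom.charZero constantCoeff

variable {R : Type*} [CommRing R] {σ : Type*}

theorem coeff_X_mul (s : σ) (f : MvPowerSeries σ R) (d : σ →₀ ℕ) :
    coeff d (X s * f) = if Finsupp.single s 1 ≤ d then coeff (d - Finsupp.single s 1) f else 0 := by
  rw [X_def, coeff_monomial_mul, one_mul]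

theorem X_sub_X_ne_zero [Nontrivial R] {u v : σ} (huv : u ≠ v) :
    (X u - X v : MvPowerSeries σ R) ≠ 0 :=
  sub_ne_zero.mpr (X_inj.not.mpr huv)

def diagonalSum (u v : σ) (f : MvPowerSeries σ R) (d : σ →₀ ℕ) : R :=
  ∑ i ∈ range (d v + 1), coeff (d + Finsupp.single u i - Finsupp.single v i) f

theorem diagonalSum_eq {u v : σ} (huv : u ≠ v) (f : MvPowerSeries σ R) (d : σ →₀ ℕ) :
    diagonalSum u v f d = coeff d f + if Finsupp.single v 1 ≤ d then
      diagonalSum u v f (d - Finsupp.single v 1 + Finsupp.single u 1) else 0 := by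
  classical
  rw [diagonalSum, sum_range_succ', add_comm]
  congr 1
  · simp
  split_ifs with hd
  · rw [Finsupp.single_le_iff] at hd
    have hv : (d - Finsupp.single v 1 + Finsupp.single u 1 : σ →₀ ℕ) v = d v - 1 := by simp [huv]
    rw [diagonalSum, hv, Nat.sub_add_cancel hd]
    refine sum_congr rfl fun i hi => congrArg (coeff · f) ?_
    rw [mem_range] at hi
    ext w
    by_cases hwv : w = v
    · subst hwv; simp [huv]; omega
    · by_cases hwu : w = u
      · subst hwu; simp [hwv]; omega
      · simp [Ne.symm hwu, Ne.symm hwv]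
  · rw [Finsupp.single_le_iff, not_le, Nat.lt_one_iff] at hd
    simp [hd]

section IdentifyVariables

variable [DecidableEq σ]

instance tendstoCofinite_update_id (u v : σ) :
    TendstoCofinite (Function.update (id : σ → σ) v u) := by
  refine (tendstoCofinite_iff_finite_preimage_singleton _).mpr fun b => ?_
  refine (Set.toFinite {b, v}).subset fun a ha => ?_
  rw [Set.mem_preimage, Set.mem_singleton_iff, Function.update_apply] at ha
  by_cases hav : a = v
  · exact Or.inr hav
  · exact Or.inl (by rwa [if_neg hav] at ha)

variable {u v : σ}

theorem coeff_rename_update_id (huv : u ≠ v) (f : MvPowerSeries σ R) {d : σ →₀ ℕ}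
    (hd : d u = 0) :
    coeff (Finsupp.mapDomain (Function.update id v u) d) (rename (Function.update id v u) f) =
      diagonalSum u v f d := by
  have hfib := Finsupp.mapDomain_update_id_eq_iff huv hd
  rw [coeff_rename, diagonalSum]
  symm
  refine sum_nbij' (fun i => d + Finsupp.single u i - Finsupp.single v i) (fun e => e u) ?_ ?_ ?_ ?_
    (fun _ _ => rfl)
  · intro i hi
    rw [mem_range] at hi
    rw [Set.Finite.mem_toFinset, Set.mem_preimage, Set.mem_singleton_iff, hfib]
    refine ⟨?_, fun w hwu hwv => ?_⟩
    · simp [huv, Ne.symm huv, hd]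
      omega
    · simp [Ne.symm hwu, Ne.symm hwv]
  · intro e he
    rw [Set.Finite.mem_toFinset, Set.mem_preimage, Set.mem_singleton_iff, hfib] at he
    rw [mem_range]
    omega
  · intro i _
    simp [huv, hd]
  · intro e he
    rw [Set.Finite.mem_toFinset, Set.mem_preimage, Set.mem_singleton_iff, hfib] at he
    ext w
    by_cases hwv : w = v
    · subst hwv; simp [huv]; omega
    · by_cases hwu : w = u
      · subst hwu; simp [hd, huv]
      · simp [Ne.symm hwu, Ne.symm hwv, he.2 w hwu hwv]

theorem X_sub_X_dvd_of_rename_eq_zero (huv : u ≠ v) {f : MvPowerSeries σ R}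
    (hf : rename (Function.update id v u) f = 0) : X u - X v ∣ f := by
  -- The diagonal sums telescope (`diagonalSum_eq`) and, by hypothesis, vanish when `d u = 0`.
  have hzero : ∀ d : σ →₀ ℕ, d u = 0 → diagonalSum u v f d = 0 := fun d hd => by
    rw [← coeff_rename_update_id huv f hd, hf, map_zero]
  set g : MvPowerSeries σ R := fun d => diagonalSum u v f (d + Finsupp.single u 1)
  refine ⟨g, ?_⟩
  ext d
  have hXu : coeff d (X u * g) = diagonalSum u v f d := by
    rw [coeff_X_mul]
    split_ifs with hd
    · exact congrArg (diagonalSum u v f) (tsub_add_cancel_of_le hd)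
    · rw [Finsupp.single_le_iff, not_le, Nat.lt_one_iff] at hd
      exact (hzero d hd).symm
  rw [sub_mul, map_sub, hXu, coeff_X_mul, diagonalSum_eq huv f d]
  split_ifs
  · exact (add_sub_cancel_right _ _).symm
  · simp

theorem X_sub_X_dvd_iff (huv : u ≠ v) {f : MvPowerSeries σ R} :
    X u - X v ∣ f ↔ rename (Function.update id v u) f = 0 := by
  refine ⟨?_, X_sub_X_dvd_of_rename_eq_zero huv⟩
  rintro ⟨g, rfl⟩
  simp [Function.update_apply]

theorem X_sub_X_dvd_of_rename_swap [NoZeroDivisors R] [CharZero R] (huv : u ≠ v)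
    {t : MvPowerSeries σ R} (ht : rename (Equiv.swap u v) t = -t) : X u - X v ∣ t := by
  have hcomp : Function.update id v u ∘ Equiv.swap u v = Function.update id v u := by
    ext w
    by_cases hwu : w = u
    · simp [hwu, huv]
    · by_cases hwv : w = v
      · simp [hwv, Function.update_apply]
      · simp [Equiv.swap_apply_of_ne_of_ne hwu hwv]
  rw [X_sub_X_dvd_iff huv]
  have h := congrArg (rename (Function.update id v u)) ht
  simp only [rename_rename, hcomp, map_neg] at h
  ext d
  simpa [CharZero.eq_neg_self_iff] using congrArg (coeff d) h

end IdentifyVariables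

theorem prime_X_sub_X [IsDomain R] {u v : σ} (huv : u ≠ v) :
    Prime (X u - X v : MvPowerSeries σ R) := by
  classical
  refine ⟨X_sub_X_ne_zero huv, fun h => ?_, fun f g hfg => ?_⟩
  · simpa using h.map constantCoeff
  · simp_rw [X_sub_X_dvd_iff huv] at hfg ⊢
    rwa [map_mul, mul_eq_zero] at hfg

theorem X_sub_X_dvd_X_sub_X_iff [Nontrivial R] {u v a b : σ} (huv : u ≠ v) (hab : a ≠ b) :
    (X u - X v : MvPowerSeries σ R) ∣ X a - X b ↔ a = u ∧ b = v ∨ a = v ∧ b = u := by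
  classical
  refine ⟨fun h => ?_, ?_⟩
  · rw [X_sub_X_dvd_iff huv, map_sub, sub_eq_zero, rename_X, rename_X, X_inj] at h
    simp only [Function.update_apply, id] at h
    split_ifs at h <;> grind
  · rintro (⟨rfl, rfl⟩ | ⟨rfl, rfl⟩)
    · exact dvd_rfl
    · exact ⟨-1, by ring⟩

end MvPowerSeries

theorem Finset.prod_dvd_of_prime_of_pairwise {ι α : Type*} [CommMonoidWithZero α] (s : Finset ι)
    (p : ι → α) (hp : ∀ i ∈ s, Prime (p i)) (hs : (s : Set ι).Pairwise fun i j => ¬ p i ∣ p j)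
    {t : α} (ht : ∀ i ∈ s, p i ∣ t) : ∏ i ∈ s, p i ∣ t := by
  classical
  induction s using Finset.induction_on generalizing t with
  | empty => simp
  | insert i s hi ih =>
    rw [prod_insert hi]
    obtain ⟨c, rfl⟩ := ht i (mem_insert_self i s)
    refine mul_dvd_mul_left _ (ih (fun j hj => hp j (mem_insert_of_mem hj))
      (hs.mono (by simp)) fun j hj => ?_)
    refine ((hp j (mem_insert_of_mem hj)).dvd_or_dvd (ht j (mem_insert_of_mem hj))).resolve_left ?_
    exact hs (mem_insert_of_mem hj) (mem_insert_self i s) (by rintro rfl; exact hi hj)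

namespace MvPowerSeries

variable {n : ℕ} {τ : Type} {R : Type} [CommRing R]

def permRename (w : Equiv.Perm (Fin n)) :
    MvPowerSeries (Fin n ⊕ τ) R →ₐ[R] MvPowerSeries (Fin n ⊕ τ) R :=
  rename (Equiv.sumCongr w (Equiv.refl τ))

@[simp]
theorem permRename_X_inl (w : Equiv.Perm (Fin n)) (i : Fin n) :
    permRename w (X (Sum.inl i) : MvPowerSeries (Fin n ⊕ τ) R) = X (Sum.inl (w i)) :=
  rename_X _ _

@[simp]
theorem permRename_X_inr (w : Equiv.Perm (Fin n)) (j : τ) :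
    permRename w (X (Sum.inr j) : MvPowerSeries (Fin n ⊕ τ) R) = X (Sum.inr j) :=
  rename_X _ _

theorem permRename_mul (w v : Equiv.Perm (Fin n)) (f : MvPowerSeries (Fin n ⊕ τ) R) :
    permRename (w * v) f = permRename w (permRename v f) := by
  have h : ⇑(Equiv.sumCongr (w * v) (Equiv.refl τ)) =
      ⇑(Equiv.sumCongr w (Equiv.refl τ)) ∘ ⇑(Equiv.sumCongr v (Equiv.refl τ)) := by
    ext (i | j) <;> rfl
  simp only [permRename, rename_rename, h]

theorem permRename_swap [DecidableEq τ] (a b : Fin n) (f : MvPowerSeries (Fin n ⊕ τ) R) :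
    permRename (Equiv.swap a b) f = rename (Equiv.swap (Sum.inl a) (Sum.inl b)) f := by
  rw [← Equiv.Perm.sumCongr_swap_refl]
  rfl

theorem permRename_injective (w : Equiv.Perm (Fin n)) :
    Function.Injective (permRename w : MvPowerSeries (Fin n ⊕ τ) R → _) :=
  rename_injective (Equiv.sumCongr w (Equiv.refl τ)).toEmbedding

variable (n τ R) in
def vandermonde : MvPowerSeries (Fin n ⊕ τ) R :=
  ∏ i : Fin n, ∏ j ∈ Ioi i, (X (Sum.inl j) - X (Sum.inl i))

theorem permRename_vandermonde (w : Equiv.Perm (Fin n)) :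
    permRename w (vandermonde n τ R) = (Equiv.Perm.sign w : ℤ) * vandermonde n τ R := by
  have hV : vandermonde n τ R = (Matrix.vandermonde fun i => X (Sum.inl i)).det :=
    (Matrix.det_vandermonde _).symm
  have hmap : (permRename w).toRingHom.mapMatrix
      (Matrix.vandermonde fun i => (X (Sum.inl i) : MvPowerSeries (Fin n ⊕ τ) R)) =
      (Matrix.vandermonde fun i => X (Sum.inl i)).submatrix w id := by
    ext i j
    simp
  rw [hV, ← Matrix.det_permute, ← hmap, ← RingHom.map_det]
  rfl

theorem vandermonde_ne_zero [IsDomain R] : vandermonde n τ R ≠ 0 :=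
  prod_ne_zero_iff.mpr fun i _ => prod_ne_zero_iff.mpr fun j hj =>
    X_sub_X_ne_zero (by simpa using (mem_Ioi.mp hj).ne')

theorem vandermonde_dvd [IsDomain R] [CharZero R] {t : MvPowerSeries (Fin n ⊕ τ) R}
    (ht : ∀ a b : Fin n, a ≠ b → permRename (Equiv.swap a b) t = -t) : vandermonde n τ R ∣ t := by
  classical
  rw [vandermonde, prod_sigma']
  have hlt : ∀ q ∈ univ.sigma fun i : Fin n => Ioi i, q.1 < q.2 := fun q hq => by simpa using hq
  refine prod_dvd_of_prime_of_pairwise _ _ (fun q hq => ?_) (fun q hq q' hq' hqq' h => ?_)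
    fun q hq => ?_
  · exact prime_X_sub_X (Sum.inl_injective.ne (hlt q hq).ne')
  · have h1 := hlt q hq
    have h2 := hlt q' hq'
    rcases (X_sub_X_dvd_X_sub_X_iff (Sum.inl_injective.ne h1.ne')
      (Sum.inl_injective.ne h2.ne')).mp h with ⟨ha, hb⟩ | ⟨ha, hb⟩ <;>
      simp only [Sum.inl.injEq] at ha hb
    · exact hqq' (Sigma.ext hb.symm (heq_of_eq ha.symm))
    · rw [ha, hb] at h2
      exact lt_asymm h1 h2
  · refine X_sub_X_dvd_of_rename_swap (Sum.inl_injective.ne (hlt q hq).ne') ?_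
    rw [← permRename_swap]
    exact ht _ _ (hlt q hq).ne'

end MvPowerSeries

namespace FGL

variable {L : Type} [CommRing L] (G : FGL L)

theorem associated_X_sub_X_fadd_neg {σ : Type} {u v : σ} (huv : u ≠ v) :
    Associated (X u - X v) (fadd G.a (X u) (G.neg (X v)) : MvPowerSeries σ L) := by
  classical
  obtain ⟨U, hU⟩ := X_sub_X_dvd_of_rename_eq_zero huv (f := fadd G.a (X u) (G.neg (X v))) (by
    rw [rename_fadd, rename_neg, rename_X, rename_X, Function.update_self,
      Function.update_of_ne huv, id]
    exact G.add_inv' _ (constantCoeff_X u))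
  have hlin :
      coeff (Finsupp.single u 1) (fadd G.a (X u) (G.neg (X v)) : MvPowerSeries σ L) = 1 := by
    rw [coeff_single_fadd G.a (constantCoeff_X u) (G.constantCoeff_neg _), FGL.neg,
      coeff_single_fsub1, coeff_X, coeff_X, if_pos rfl,
      if_neg ((Finsupp.single_left_inj one_ne_zero).not.mpr huv), G.a_one_zero]
    ring
  have hmul : coeff (Finsupp.single u 1) ((X u - X v) * U) = constantCoeff U := by
    rw [sub_mul, map_sub, coeff_X_mul, coeff_X_mul, if_pos le_rfl,
      if_neg (by simpa [Finsupp.single_apply] using huv), tsub_self, coeff_zero_eq_constantCoeff,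
      sub_zero]
  have hU1 : constantCoeff U = 1 := by rw [← hmul, ← hU, hlin]
  exact ⟨(isUnit_iff_constantCoeff.mpr (hU1 ▸ isUnit_one)).unit, hU.symm⟩

theorem prod_fadd_neg_dvd_vandermonde {n : ℕ} {τ : Type} (s : Finset (Fin n)) :
    ∏ i ∈ s, ∏ j ∈ Ioi i, fadd G.a (X (Sum.inl i)) (G.neg (X (Sum.inl j))) ∣
      vandermonde n τ L := by
  classical
  refine (prod_dvd_prod_of_subset s univ _ (subset_univ s)).trans ?_
  refine (Associated.prod _ _ _ fun i _ => Associated.prod _ _ _ fun j hj => ?_).symm.dvd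
  rw [← neg_sub]
  exact (G.associated_X_sub_X_fadd_neg (Sum.inl_injective.ne (mem_Ioi.mp hj).ne)).neg_left

end FGL

theorem Subgroup.sum_eq_card_nsmul_sum_quotient {G M : Type*} [Group G] [Fintype G]
    [AddCommMonoid M] (H : Subgroup G) [Fintype (G ⧸ H)] [Fintype H] (f : G → M)
    (hf : ∀ g, ∀ h ∈ H, f (g * h) = f g) :
    ∑ g, f g = Nat.card H • ∑ q : G ⧸ H, f q.out := by
  have hbij : Function.Bijective fun p : (G ⧸ H) × H => p.1.out * p.2 := by
    refine ⟨fun p p' hpp' => ?_, fun g => ?_⟩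
    · simp only at hpp'
      have hq : p.1 = p'.1 := by
        simpa [QuotientGroup.mk_mul_of_mem _ p.2.2, QuotientGroup.mk_mul_of_mem _ p'.2.2] using
          congrArg (QuotientGroup.mk (s := H)) hpp'
      rw [hq] at hpp'
      exact Prod.ext hq (Subtype.ext (mul_left_cancel hpp'))
    · obtain ⟨h, hh⟩ := QuotientGroup.mk_out_eq_mul H g
      exact ⟨((g : G ⧸ H), h⁻¹), by simp [hh]⟩
  rw [← Fintype.sum_bijective _ hbij (fun p => f (p.1.out * p.2)) f (fun _ => rfl),
    Fintype.sum_prod_type, smul_sum, Nat.card_eq_fintype_card]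
  simp [hf]

theorem card_fixingSubgroup_val_lt (n r : ℕ) :
    Nat.card (fixingSubgroup (Equiv.Perm (Fin n)) {i : Fin n | (i : ℕ) < r}) =
      (n - r).factorial := by
  classical
  have e : fixingSubgroup (Equiv.Perm (Fin n)) {i : Fin n | (i : ℕ) < r} ≃
      Equiv.Perm {i : Fin n // ¬ (i : ℕ) < r} :=
    (Equiv.subtypeEquivRight fun v => by simp [mem_fixingSubgroup_iff]).trans
      (Equiv.Perm.subtypeEquivSubtypePerm _).symm
  rw [Nat.card_congr e, Nat.card_perm, Nat.card_eq_fintype_card, Fintype.card_subtype_compl,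
    Fintype.card_subtype, Fin.card_filter_val_lt, Fintype.card_fin]
  congr 1
  omega

theorem Equiv.Perm.intCast_sign_mul_self {α S : Type*} [DecidableEq α] [Fintype α] [Ring S]
    (w : Equiv.Perm α) : ((Equiv.Perm.sign w : ℤ) : S) * (Equiv.Perm.sign w : ℤ) = 1 := by
  rw [← Int.cast_mul, ← Units.val_mul, Int.units_mul_self, Units.val_one, Int.cast_one]

section Symmetrization

variable {n : ℕ} {τ : Type} {R : Type} [CommRing R]

local notation "K" => FractionRing (MvPowerSeries (Fin n ⊕ τ) R)

theorem permRename_swap_sum_sign_mul (f : MvPowerSeries (Fin n ⊕ τ) R) {a b : Fin n} (hab : a ≠ b) :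
    permRename (Equiv.swap a b)
        (∑ w, ((Equiv.Perm.sign w : ℤ) : MvPowerSeries (Fin n ⊕ τ) R) * permRename w f) =
      -∑ w, ((Equiv.Perm.sign w : ℤ) : MvPowerSeries (Fin n ⊕ τ) R) * permRename w f := calc
  _ = ∑ w, -(((Equiv.Perm.sign (Equiv.swap a b * w) : ℤ) : MvPowerSeries (Fin n ⊕ τ) R) *
      permRename (Equiv.swap a b * w) f) := by
    rw [map_sum]
    refine sum_congr rfl fun w _ => ?_
    simp only [map_mul, map_intCast, permRename_mul, Equiv.Perm.sign_swap hab, Units.val_mul,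
      Units.val_neg, Units.val_one, Int.cast_mul, Int.cast_neg, Int.cast_one]
    ring
  _ = _ := by
    rw [sum_neg_distrib]
    exact congrArg _ (Equiv.sum_comp (Equiv.mulLeft (Equiv.swap a b))
      fun w => ((Equiv.Perm.sign w : ℤ) : MvPowerSeries (Fin n ⊕ τ) R) * permRename w f)

theorem algebraMap_permRename_div_eq [IsDomain R] {A B C : MvPowerSeries (Fin n ⊕ τ) R}
    (hC : vandermonde n τ R = B * C) (w : Equiv.Perm (Fin n)) :
    algebraMap _ K (permRename w A) / algebraMap _ K (permRename w B) =
      algebraMap _ K ((Equiv.Perm.sign w : ℤ) * permRename w (A * C)) /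
        algebraMap _ K (vandermonde n τ R) := by
  have hV0 : vandermonde n τ R ≠ 0 := vandermonde_ne_zero
  have halg := IsFractionRing.injective (MvPowerSeries (Fin n ⊕ τ) R) K
  rw [div_eq_div_iff ((map_ne_zero_iff _ halg).mpr ((map_ne_zero_iff _ (permRename_injective w)).mpr
    (left_ne_zero_of_mul (hC ▸ hV0)))) ((map_ne_zero_iff _ halg).mpr hV0), ← map_mul, ← map_mul]
  congr 1
  have hρ : permRename w B * permRename w C = (Equiv.Perm.sign w : ℤ) * vandermonde n τ R := by
    rw [← map_mul, ← hC, permRename_vandermonde]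
  have hs : ((Equiv.Perm.sign w : ℤ) : MvPowerSeries (Fin n ⊕ τ) R) * (Equiv.Perm.sign w : ℤ) = 1 :=
    w.intCast_sign_mul_self
  rw [map_mul]
  linear_combination (-(Equiv.Perm.sign w : MvPowerSeries (Fin n ⊕ τ) R) * permRename w A) * hρ -
    permRename w A * vandermonde n τ R * hs

theorem exists_sum_permRename_div_eq [IsDomain R] [CharZero R] (H : Subgroup (Equiv.Perm (Fin n)))
    {A B : MvPowerSeries (Fin n ⊕ τ) R} (hBV : B ∣ vandermonde n τ R)
    (hA : ∀ v ∈ H, permRename v A = A) (hB : ∀ v ∈ H, permRename v B = B) :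
    ∃ g : MvPowerSeries (Fin n ⊕ τ) R,
      ∑ w : Equiv.Perm (Fin n), algebraMap _ K (permRename w A) / algebraMap _ K (permRename w B) =
        Nat.card H * algebraMap _ K g := by
  classical
  obtain ⟨C, hC⟩ := hBV
  have hB0 : B ≠ 0 := left_ne_zero_of_mul (hC ▸ vandermonde_ne_zero)
  have hCH : ∀ v ∈ H, permRename v C = (Equiv.Perm.sign v : ℤ) * C := fun v hv => by
    refine mul_left_cancel₀ hB0 ?_
    calc B * permRename v C = permRename v (vandermonde n τ R) := by rw [hC, map_mul, hB v hv]
      _ = B * ((Equiv.Perm.sign v : ℤ) * C) := by rw [permRename_vandermonde, hC]; ring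
  set c : Equiv.Perm (Fin n) → MvPowerSeries (Fin n ⊕ τ) R :=
    fun w => (Equiv.Perm.sign w : ℤ) * permRename w (A * C)
  have hc : ∀ w, ∀ v ∈ H, c (w * v) = c w := fun w v hv => by
    simp only [c, permRename_mul, map_mul, hA v hv, hCH v hv, Units.val_mul, Int.cast_mul,
      map_intCast]
    linear_combination (Equiv.Perm.sign w : MvPowerSeries (Fin n ⊕ τ) R) *
      permRename w A * permRename w C * v.intCast_sign_mul_self (S := MvPowerSeries (Fin n ⊕ τ) R)
  have hsum := H.sum_eq_card_nsmul_sum_quotient c hc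
  have ht : ∀ a b : Fin n, a ≠ b →
      permRename (Equiv.swap a b) (∑ q : Equiv.Perm (Fin n) ⧸ H, c q.out) =
        -∑ q : Equiv.Perm (Fin n) ⧸ H, c q.out :=
    fun a b hab => by
      have hneg : permRename (Equiv.swap a b) (∑ w, c w) = -∑ w, c w :=
        permRename_swap_sum_sign_mul (A * C) hab
      rw [hsum, map_nsmul, ← smul_neg] at hneg
      exact nsmul_right_injective Nat.card_pos.ne' hneg
  obtain ⟨g, hg⟩ := vandermonde_dvd ht
  refine ⟨g, ?_⟩
  rw [sum_congr rfl fun w _ => algebraMap_permRename_div_eq hC w, ← sum_div, ← map_sum]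
  change algebraMap _ K (∑ w, c w) / _ = _
  rw [hsum, hg, nsmul_eq_mul, map_mul, map_mul, map_natCast]
  field_simp [(map_ne_zero_iff _ (IsFractionRing.injective _ K)).mpr
    (vandermonde_ne_zero (n := n) (τ := τ) (R := R))]

end Symmetrization

section FactorialSchur

variable {L : Type} [CommRing L] (G : FGL L) {n : ℕ} {τ : Type}

@[simp]
theorem FGL.permRename_fadd (w : Equiv.Perm (Fin n)) (x y : MvPowerSeries (Fin n ⊕ τ) L) :
    permRename w (fadd G.a x y) = fadd G.a (permRename w x) (permRename w y) :=
  rename_fadd _ _ _ _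

@[simp]
theorem FGL.permRename_neg (w : Equiv.Perm (Fin n)) (x : MvPowerSeries (Fin n ⊕ τ) L) :
    permRename w (G.neg x) = G.neg (permRename w x) :=
  G.rename_neg _ _

theorem permRename_facPow (w : Equiv.Perm (Fin n)) (t : MvPowerSeries (Fin n ⊕ τ) L)
    {bs : ℕ → MvPowerSeries (Fin n ⊕ τ) L} (hbs : ∀ j, permRename w (bs j) = bs j) (k : ℕ) :
    permRename w (facPow G t bs k) = facPow G (permRename w t) bs k := by
  simp [facPow, hbs]

theorem permRename_facPowQ (w : Equiv.Perm (Fin n)) (t : MvPowerSeries (Fin n ⊕ τ) L)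
    {bs : ℕ → MvPowerSeries (Fin n ⊕ τ) L} (hbs : ∀ j, permRename w (bs j) = bs j) (k : ℕ) :
    permRename w (facPowQ G t bs k) = facPowQ G (permRename w t) bs k := by
  cases k <;> simp [facPowQ, permRename_facPow G w t hbs]

theorem facPow_zero {σ : Type} (t : MvPowerSeries σ L) (bs : ℕ → MvPowerSeries σ L) :
    facPow G t bs 0 = 1 := by
  simp [facPow]

end FactorialSchur

theorem IsSP.eq_zero_of_spLen_le {n : ℕ} {lam : Fin n → ℕ} (hlam : IsSP lam) {i : Fin n}
    (hi : spLen lam ≤ i) : lam i = 0 := by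
  classical
  by_contra hne
  have hsub : Iic i ⊆ univ.filter fun j => lam j ≠ 0 := fun j hj => by
    rcases (mem_Iic.mp hj).lt_or_eq with hlt | rfl
    · rcases hlam j i hlt with h | h
      · simpa using (Nat.zero_le _).trans_lt h |>.ne'
      · exact absurd h.2 hne
    · simpa using hne
  have := card_le_card hsub
  rw [Fin.card_Iic] at this
  exact absurd hi (not_le.mpr this)

theorem prod_filter_prod_Ioi_comp_perm {M : Type*} [CommMonoid M] {n r : ℕ}
    (F : Fin n → Fin n → M) {v : Equiv.Perm (Fin n)} (hv : ∀ i : Fin n, (i : ℕ) < r → v i = i) :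
    ∏ i ∈ univ.filter (fun i : Fin n => (i : ℕ) < r), ∏ j ∈ Ioi i, F (v i) (v j) =
      ∏ i ∈ univ.filter (fun i : Fin n => (i : ℕ) < r), ∏ j ∈ Ioi i, F i j := by
  refine prod_congr rfl fun i hi => ?_
  rw [mem_filter] at hi
  rw [hv i hi.2]
  refine Equiv.Perm.prod_comp v _ (F i) fun j hj => ?_
  have hjr : ¬ (j : ℕ) < r := fun hjr => hj (hv j hjr)
  exact mem_Ioi.mpr (Fin.lt_def.mpr (by omega))

theorem exists_symmetrization_eq_algebraMap {L : Type} [CommRing L] [IsDomain L] [CharZero L]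
    (G : FGL L) {n : ℕ} {τ : Type} {lam : Fin n → ℕ} (hlam : IsSP lam)
    (φ : MvPowerSeries (Fin n ⊕ τ) L → ℕ → MvPowerSeries (Fin n ⊕ τ) L) (hφ0 : ∀ t, φ t 0 = 1)
    (hφ : ∀ w t k, permRename w (φ t k) = φ (permRename w t) k) :
    ∃ g : MvPowerSeries (Fin n ⊕ τ) L,
      (((n - spLen lam).factorial : FractionRing (MvPowerSeries (Fin n ⊕ τ) L)))⁻¹ *
        ∑ w : Equiv.Perm (Fin n),
          algebraMap (MvPowerSeries (Fin n ⊕ τ) L) (FractionRing (MvPowerSeries (Fin n ⊕ τ) L))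
            ((∏ i : Fin n, φ (X (Sum.inl (w i))) (lam i)) *
              ∏ i ∈ univ.filter (fun i : Fin n => (i : ℕ) < spLen lam), ∏ j ∈ Ioi i,
                fadd G.a (X (Sum.inl (w i))) (X (Sum.inl (w j)))) /
          algebraMap (MvPowerSeries (Fin n ⊕ τ) L) (FractionRing (MvPowerSeries (Fin n ⊕ τ) L))
            (∏ i ∈ univ.filter (fun i : Fin n => (i : ℕ) < spLen lam), ∏ j ∈ Ioi i,
              fadd G.a (X (Sum.inl (w i))) (G.neg (X (Sum.inl (w j))))) =
        algebraMap (MvPowerSeries (Fin n ⊕ τ) L) (FractionRing (MvPowerSeries (Fin n ⊕ τ) L))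
          g := by
  set r := spLen lam
  set A : MvPowerSeries (Fin n ⊕ τ) L := (∏ i : Fin n, φ (X (Sum.inl i)) (lam i)) *
    ∏ i ∈ univ.filter (fun i : Fin n => (i : ℕ) < r), ∏ j ∈ Ioi i,
      fadd G.a (X (Sum.inl i)) (X (Sum.inl j))
  set B : MvPowerSeries (Fin n ⊕ τ) L := ∏ i ∈ univ.filter (fun i : Fin n => (i : ℕ) < r),
    ∏ j ∈ Ioi i, fadd G.a (X (Sum.inl i)) (G.neg (X (Sum.inl j)))
  have hρA : ∀ w, (∏ i : Fin n, φ (X (Sum.inl (w i))) (lam i)) *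
      ∏ i ∈ univ.filter (fun i : Fin n => (i : ℕ) < r), ∏ j ∈ Ioi i,
        fadd G.a (X (Sum.inl (w i))) (X (Sum.inl (w j))) = permRename w A := fun w => by
    simp [A, map_prod, hφ]
  have hρB : ∀ w, ∏ i ∈ univ.filter (fun i : Fin n => (i : ℕ) < r), ∏ j ∈ Ioi i,
      fadd G.a (X (Sum.inl (w i))) (G.neg (X (Sum.inl (w j)))) = permRename w B := fun w => by
    simp [B, map_prod]
  set H := fixingSubgroup (Equiv.Perm (Fin n)) {i : Fin n | (i : ℕ) < r}
  have hH : ∀ v ∈ H, ∀ i : Fin n, (i : ℕ) < r → v i = i := fun v hv i hi =>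
    (mem_fixingSubgroup_iff _).mp hv i hi
  have hA : ∀ v ∈ H, permRename v A = A := fun v hv => by
    rw [← hρA]
    congr 1
    · refine prod_congr rfl fun i _ => ?_
      by_cases hi : (i : ℕ) < r
      · rw [hH v hv i hi]
      · rw [hlam.eq_zero_of_spLen_le (not_lt.mp hi), hφ0, hφ0]
    · exact prod_filter_prod_Ioi_comp_perm (fun i j => fadd G.a (X (Sum.inl i)) (X (Sum.inl j)))
        (hH v hv)
  have hB : ∀ v ∈ H, permRename v B = B := fun v hv => by
    rw [← hρB]
    exact prod_filter_prod_Ioi_comp_perm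
      (fun i j => fadd G.a (X (Sum.inl i)) (G.neg (X (Sum.inl j)))) (hH v hv)
  obtain ⟨g, hg⟩ := exists_sum_permRename_div_eq H (G.prod_fadd_neg_dvd_vandermonde _) hA hB
  refine ⟨g, ?_⟩
  simp only [hρA, hρB]
  have : CharZero (FractionRing (MvPowerSeries (Fin n ⊕ τ) L)) :=
    charZero_of_injective_algebraMap (IsFractionRing.injective (MvPowerSeries (Fin n ⊕ τ) L) _)
  rw [hg, card_fixingSubgroup_val_lt, ← mul_assoc,
    inv_mul_cancel₀ (Nat.cast_ne_zero.mpr (Nat.factorial_ne_zero _)), one_mul]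

/-- For a strict partition `λ` of length `r ≤ n`, the universal
factorial Schur functions `P^L_λ(x_1,…,x_n|b)` and `Q^L_λ(x_1,…,x_n|b)` are
well defined elements of `L[[b]][[x_1,…,x_n]]`: the symmetrized sums of rational
functions defining them are (images of) genuine formal power series in the
variables `x_i = X (inl i)` and `b_j = X (inr (j-1))`. -/
theorem universal_factorial_schur_PQ_well_defined
    {L : Type} [CommRing L] [IsDomain L] [CharZero L] (G : FGL L)
    (n : ℕ) (lam : Fin n → ℕ) (hlam : IsSP lam) :
    (∃ g : MvPowerSeries (Fin n ⊕ ℕ) L,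
      PLgen G n (spLen lam) lam (fun i => MvPowerSeries.X (Sum.inl i))
          (fun j => MvPowerSeries.X (Sum.inr j)) =
        algebraMap (MvPowerSeries (Fin n ⊕ ℕ) L) (FractionRing (MvPowerSeries (Fin n ⊕ ℕ) L)) g) ∧
    (∃ g : MvPowerSeries (Fin n ⊕ ℕ) L,
      QLgen G n (spLen lam) lam (fun i => MvPowerSeries.X (Sum.inl i))
          (fun j => MvPowerSeries.X (Sum.inr j)) =
        algebraMap (MvPowerSeries (Fin n ⊕ ℕ) L) (FractionRing (MvPowerSeries (Fin n ⊕ ℕ) L)) g) :=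
  ⟨exists_symmetrization_eq_algebraMap G hlam (fun t k => facPow G t (fun j => X (Sum.inr j)) k)
      (fun t => facPow_zero G t _)
      fun w t k => permRename_facPow G w t (fun j => permRename_X_inr w j) k,
    exists_symmetrization_eq_algebraMap G hlam (fun t k => facPowQ G t (fun j => X (Sum.inr j)) k)
      (fun _ => rfl)
      fun w t k => permRename_facPowQ G w t (fun j => permRename_X_inr w j) k⟩

end
end

section
/- For every positive integer n, with ρ_m = (m, m−1, ..., 1): P^L_{ρ_{n−1}}(x_1,...,x_n) = ( ∏_{1≤i<j≤n} (x_i +_F x_j) ) · s^L_∅(x_1,...,x_n) and Q^L_{ρ_n}(x_1,...,x_n) = ( ∏_{1≤i≤j≤n} (x_i +_F x_j) ) · s^L_∅(x_1,...,x_n). -/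
/-! For the staircase shapes the prefactor `1/(n-r)!` is `1` and every pair `i < j` is counted.
As `F` is commutative, the numerator `∏_{i<j} (x_{w i} +_F x_{w j})` does not depend on `w`, so it
factors out of the sum over `S_n`, leaving exactly the summand of `s^L_∅`. For `Q`,
`[[x_i]]^{n+1-i} = (x_i +_F x_i)·[x_i]^{n-i}`, and the symmetric product `∏_i (x_i +_F x_i)`
supplies the diagonal factors `i = j`. -/

open Finset MvPowerSeries

theorem prod_Ioi_comp_perm_of_symm {ι M : Type*} [LinearOrder ι] [Fintype ι]
    [LocallyFiniteOrderTop ι] [CommMonoid M] (w : Equiv.Perm ι) {g : ι → ι → M}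
    (hg : ∀ i j, g i j = g j i) :
    ∏ i, ∏ j ∈ Ioi i, g (w i) (w j) = ∏ i, ∏ j ∈ Ioi i, g i j := by
  rw [prod_sigma', prod_sigma']
  refine prod_nbij' (fun p => ⟨min (w p.1) (w p.2), max (w p.1) (w p.2)⟩)
    (fun p => ⟨min (w.symm p.1) (w.symm p.2), max (w.symm p.1) (w.symm p.2)⟩) ?_ ?_ ?_ ?_ ?_
  all_goals
    rintro ⟨a, b⟩ hab
    simp only [mem_sigma, mem_univ, mem_Ioi, true_and] at hab ⊢
  · exact min_lt_max.2 (w.injective.ne hab.ne)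
  · exact min_lt_max.2 (w.symm.injective.ne hab.ne)
  · rcases le_total (w a) (w b) with h | h <;> simp [h, hab.le]
  · rcases le_total (w.symm a) (w.symm b) with h | h <;> simp [h, hab.le]
  · rcases le_total (w a) (w b) with h | h <;> simp [h, hg (w a)]

theorem prod_Ici_eq_prod_mul_prod_Ioi {ι M : Type*} [PartialOrder ι] [Fintype ι]
    [LocallyFiniteOrderTop ι] [CommMonoid M] (f : ι → ι → M) :
    ∏ i, ∏ j ∈ Ici i, f i j = (∏ i, f i i) * ∏ i, ∏ j ∈ Ioi i, f i j := by
  simp only [Ici_eq_cons_Ioi, prod_cons, prod_mul_distrib]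

theorem prod_filter_val_lt_prod_Ioi {M : Type*} [CommMonoid M] {n r : ℕ} (hr : n - 1 ≤ r)
    (f : Fin n → Fin n → M) :
    ∏ i ∈ univ.filter (fun i : Fin n => (i : ℕ) < r), ∏ j ∈ Ioi i, f i j =
      ∏ i, ∏ j ∈ Ioi i, f i j := by
  refine prod_subset (filter_subset _ _) fun i _ hi => ?_
  have hmax : IsMax i := fun j _ => by
    simp only [mem_filter, mem_univ, true_and, not_lt] at hi
    omega
  rw [Ioi_eq_empty.2 hmax, prod_empty]

variable {L : Type} [CommRing L] [IsDomain L] [CharZero L] {σ : Type} (G : FGL L) {n : ℕ}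
  {x : Fin n → MvPowerSeries σ L}

theorem PLgen_staircase (hx : ∀ i, constantCoeff (x i) = 0) (bs : ℕ → MvPowerSeries σ L) :
    PLgen G n (n - 1) (fun i => n - 1 - (i : ℕ)) x bs =
      algebraMap _ (FractionRing (MvPowerSeries σ L))
        (∏ i, ∏ j ∈ Ioi i, fadd G.a (x i) (x j)) * sLgen G n 0 x bs := by
  have hfact : ((n - (n - 1)).factorial : FractionRing (MvPowerSeries σ L)) = 1 := by
    rw [Nat.factorial_eq_one.2 (by omega), Nat.cast_one]
  rw [PLgen, sLgen, hfact, inv_one, one_mul, mul_sum]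
  refine sum_congr rfl fun w _ => ?_
  rw [prod_filter_val_lt_prod_Ioi le_rfl, prod_filter_val_lt_prod_Ioi le_rfl,
    prod_Ioi_comp_perm_of_symm w fun i j => G.comm' _ _ (hx i) (hx j), map_mul, mul_comm,
    mul_div_assoc]
  simp only [Pi.zero_apply, zero_add]

theorem QLgen_staircase (hx : ∀ i, constantCoeff (x i) = 0) (bs : ℕ → MvPowerSeries σ L) :
    QLgen G n n (fun i => n - (i : ℕ)) x bs =
      algebraMap _ (FractionRing (MvPowerSeries σ L))
        (∏ i, ∏ j ∈ Ici i, fadd G.a (x i) (x j)) * sLgen G n 0 x bs := by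
  rw [QLgen, sLgen, Nat.sub_self, Nat.factorial_zero, Nat.cast_one, inv_one, one_mul, mul_sum]
  refine sum_congr rfl fun w _ => ?_
  have hfacPowQ : ∏ i : Fin n, facPowQ G (x (w i)) bs (n - i) =
      (∏ i, fadd G.a (x i) (x i)) * ∏ i : Fin n, facPow G (x (w i)) bs (n - 1 - i) := by
    rw [← Equiv.prod_comp w fun i => fadd G.a (x i) (x i), ← prod_mul_distrib]
    refine prod_congr rfl fun i _ => ?_
    rw [show n - (i : ℕ) = n - 1 - i + 1 by omega, facPowQ]
  rw [prod_filter_val_lt_prod_Ioi (by omega), prod_filter_val_lt_prod_Ioi (by omega),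
    prod_Ioi_comp_perm_of_symm w fun i j => G.comm' _ _ (hx i) (hx j), hfacPowQ,
    prod_Ici_eq_prod_mul_prod_Ioi]
  simp only [Pi.zero_apply, zero_add, map_mul]
  ring

theorem staircase_factorization_general
    {L : Type} [CommRing L] [IsDomain L] [CharZero L] (G : FGL L) (n : ℕ) :
    PLgen G n (n - 1) (fun i : Fin n => n - 1 - (i : ℕ)) (fun i => MvPowerSeries.X i) 0 =
      algebraMap (MvPowerSeries (Fin n) L) (FractionRing (MvPowerSeries (Fin n) L))
        (∏ i : Fin n, ∏ j ∈ Finset.Ioi i, fadd G.a (MvPowerSeries.X i) (MvPowerSeries.X j)) *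
      sLgen G n 0 (fun i => MvPowerSeries.X i) 0 ∧
    QLgen G n n (fun i : Fin n => n - (i : ℕ)) (fun i => MvPowerSeries.X i) 0 =
      algebraMap (MvPowerSeries (Fin n) L) (FractionRing (MvPowerSeries (Fin n) L))
        (∏ i : Fin n, ∏ j ∈ Finset.Ici i, fadd G.a (MvPowerSeries.X i) (MvPowerSeries.X j)) *
      sLgen G n 0 (fun i => MvPowerSeries.X i) 0 :=
  ⟨PLgen_staircase G (fun i => constantCoeff_X i) 0,
    QLgen_staircase G (fun i => constantCoeff_X i) 0⟩

/-- Factorization for the staircase partitions `ρ_{n-1}` and `ρ_n`: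
`P^L_{ρ_{n-1}}(x_1,…,x_n) = (∏_{i<j}(x_i +_F x_j))·s^L_∅(x_1,…,x_n)` and
`Q^L_{ρ_n}(x_1,…,x_n) = (∏_{i≤j}(x_i +_F x_j))·s^L_∅(x_1,…,x_n)`. -/
theorem staircase_factorization
    {L : Type} [CommRing L] [IsDomain L] [CharZero L] (G : FGL L) (n : ℕ) (hn : 0 < n) :
    PLgen G n (n - 1) (fun i : Fin n => n - 1 - (i : ℕ)) (fun i => MvPowerSeries.X i) 0 =
      algebraMap (MvPowerSeries (Fin n) L) (FractionRing (MvPowerSeries (Fin n) L))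
        (∏ i : Fin n, ∏ j ∈ Finset.Ioi i, fadd G.a (MvPowerSeries.X i) (MvPowerSeries.X j)) *
      sLgen G n 0 (fun i => MvPowerSeries.X i) 0 ∧
    QLgen G n n (fun i : Fin n => n - (i : ℕ)) (fun i => MvPowerSeries.X i) 0 =
      algebraMap (MvPowerSeries (Fin n) L) (FractionRing (MvPowerSeries (Fin n) L))
        (∏ i : Fin n, ∏ j ∈ Finset.Ici i, fadd G.a (MvPowerSeries.X i) (MvPowerSeries.X j)) *
      sLgen G n 0 (fun i => MvPowerSeries.X i) 0 :=
  staircase_factorization_general G n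
end

section
/- Hook sum formula: for every k ≥ 1, gp_k(y) = Σ_{a=1}^k g_{(a,1^{k−a})}(y), where g_{(a,1^{k−a})} is the Lam–Pylyavskyy dual stable Grothendieck polynomial indexed by the hook partition (a, 1, 1, ..., 1) with k − a parts equal to 1. -/
/- The alphabet `1' < 1 < 2' < 2 < ⋯` is encoded by `ℕ`: the primed letter
`(m+1)'` is the even code `2m` and the unprimed letter `m+1` is the odd code
`2m+1`; both correspond to the variable `y_{m+1} = X m` of `MvPowerSeries ℕ ℤ`.
A one-row tableau of shape `(k)` with weakly increasing rows (and trivially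
weakly increasing columns) is a monotone word `w : Fin k → ℕ`. -/

noncomputable section

/-- The weight `y^T` of a one-row tableau: each occurrence of an unprimed letter
`i` contributes `y_i` (one column per box), and each primed letter `i'` that
occurs contributes `y_i` once (it occurs in one row). -/
def wordWt (k : ℕ) (w : Fin k → ℕ) : ℕ →₀ ℕ :=
  (∑ i : Fin k, if Odd (w i) then Finsupp.single (w i / 2) 1 else 0) +
  ∑ c ∈ (Finset.univ.image w).filter (fun c => Even c), Finsupp.single (c / 2) 1

/-- `gp_k(y) = ∑_{T ∈ Tab'((k))} y^T`: the sum of weights over one-row tableaux of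
shape `(k)` whose leftmost box contains a primed letter, defined coefficientwise. -/
def gpPoly (k : ℕ) : MvPowerSeries ℕ ℤ :=
  fun d => (((Finset.univ : Finset (Fin k → Fin (2 * d.support.sup id + 2))).filter
    (fun w : Fin k → Fin (2 * d.support.sup id + 2) =>
      Monotone w ∧ (∀ h : 0 < k, Even ((w ⟨0, h⟩ : ℕ))) ∧
      wordWt k (fun i => (w i : ℕ)) = d)).card : ℤ)

/- Reverse plane partitions of hook shape `(a, 1^m)`: entries are positive
integers, encoded `0`-based (the code `v : ℕ` is the entry `v+1`, contributing to
the variable `y_{v+1} = X v`).  Such a filling consists of a weakly increasing row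
`r : Fin a → ℕ` and a weakly increasing column tail `c : Fin m → ℕ` below the
corner, with corner entry `r 0 ≤ c 0`. -/

/-- The weight of a hook-shaped reverse plane partition: each entry value `v`
contributes `y_{v+1}` once for every column containing it; the first column
consists of the corner together with the column tail, the remaining `a-1`
columns are the single boxes `r 1, …, r (a-1)`. -/
def hookWt (a m : ℕ) (r : Fin a → ℕ) (c : Fin m → ℕ) : ℕ →₀ ℕ :=
  (∑ j : Fin a, if (j : ℕ) ≠ 0 then Finsupp.single (r j) 1 else 0) +
  ∑ v ∈ (Finset.univ.image c ∪
      ((Finset.univ : Finset (Fin a)).filter (fun j : Fin a => (j : ℕ) = 0)).image r),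
    Finsupp.single v 1

/-- The Lam–Pylyavskyy dual stable Grothendieck polynomial `g_{(a,1^m)}(y)` of
hook shape, defined coefficientwise: the coefficient of a monomial `d` is the
number of reverse plane partitions of shape `(a,1^m)` of weight `d`. -/
def ghook (a m : ℕ) : MvPowerSeries ℕ ℤ :=
  fun d => (((Finset.univ :
      Finset ((Fin a → Fin (d.support.sup id + 1)) × (Fin m → Fin (d.support.sup id + 1)))).filter
    (fun rc : (Fin a → Fin (d.support.sup id + 1)) × (Fin m → Fin (d.support.sup id + 1)) =>
      Monotone rc.1 ∧ Monotone rc.2 ∧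
      (∀ (ha : 0 < a) (hm : 0 < m), rc.1 ⟨0, ha⟩ ≤ rc.2 ⟨0, hm⟩) ∧
      hookWt a m (fun j => (rc.1 j : ℕ)) (fun j => (rc.2 j : ℕ)) = d)).card : ℤ)

/-!
Give the entries of the first column of a hook reverse plane partition of shape `(a, 1^m)`
primed letters and the other `a - 1` entries of its first row unprimed letters, and sort.
The corner is the least entry, so the resulting one-row tableau starts with a primed letter,
and the weights agree: the first column contributes each of its distinct values once, just as
the primed letters of a row do, while every other column is a single box, contributing like an
unprimed letter. Conversely, splitting a one-row tableau into its primed and unprimed letters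
recovers the hook, whose arm `a - 1` is the number of unprimed letters.
-/

section SortedTuples

variable {α : Type*} {n : ℕ}

theorem apply_mem_coe_ofFn (w : Fin n → α) (i : Fin n) : w i ∈ (List.ofFn w : Multiset α) :=
  Multiset.mem_coe.mpr (List.mem_ofFn.mpr ⟨i, rfl⟩)

theorem card_filter_univ_eq_card_filter_ofFn (w : Fin n → α) (p : α → Prop) [DecidablePred p] :
    (Finset.univ.filter fun i => p (w i)).card =
      Multiset.card ((List.ofFn w : Multiset α).filter p) := by
  rw [← Fin.univ_val_map, Multiset.filter_map, Multiset.card_map]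
  rfl

variable [LinearOrder α]

theorem Monotone.eq_of_coe_ofFn_eq {w w' : Fin n → α} (hw : Monotone w) (hw' : Monotone w')
    (h : (List.ofFn w : Multiset α) = List.ofFn w') : w = w' :=
  List.ofFn_injective <| (Multiset.coe_eq_coe.mp h).eq_of_pairwise'
    hw.sortedLE_ofFn.pairwise hw'.sortedLE_ofFn.pairwise

theorem Monotone.apply_zero_le {w : Fin n → α} (hw : Monotone w) (hn : 0 < n) {x : α}
    (hx : x ∈ (List.ofFn w : Multiset α)) : w ⟨0, hn⟩ ≤ x := by
  obtain ⟨i, rfl⟩ := List.mem_ofFn.mp (Multiset.mem_coe.mp hx)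
  exact hw (Nat.zero_le i.val)

theorem Fin.monotone_cons_iff {a : α} {f : Fin n → α} :
    Monotone (Fin.cons a f : Fin (n + 1) → α) ↔ (∀ i, a ≤ f i) ∧ Monotone f := by
  simpa only [monotone_iff_forall_lt, Relator.LiftFun] using
    Fin.liftFun_cons (· ≤ ·) (a := a) (f := f)

namespace Multiset

def sortTuple (S : Multiset α) {k : ℕ} (h : card S = k) : Fin k → α :=
  fun i => (S.sort (· ≤ ·)).get (i.cast (by rw [length_sort, h]))

variable (S : Multiset α) {k : ℕ} (h : card S = k)

theorem monotone_sortTuple : Monotone (S.sortTuple h) := fun _ _ hij =>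
  (S.pairwise_sort (· ≤ ·)).sortedLE.monotone_get hij

theorem coe_ofFn_sortTuple : (List.ofFn (S.sortTuple h) : Multiset α) = S := by
  have : List.ofFn (S.sortTuple h) = S.sort (· ≤ ·) :=
    List.ext_get (by simp [h]) fun i _ _ => by simp [sortTuple]
  rw [this, sort_eq]

theorem sortTuple_mem (i : Fin k) : S.sortTuple h i ∈ S := by
  simpa only [coe_ofFn_sortTuple] using apply_mem_coe_ofFn (S.sortTuple h) i

end Multiset

end SortedTuples

section Letters

open Finsupp Multiset

def letters (P U : Multiset ℕ) : Multiset ℕ := P.map (2 * ·) + U.map (2 * · + 1)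

def lettersWt (W : Multiset ℕ) : ℕ →₀ ℕ :=
  (W.map fun c => if Odd c then single (c / 2) 1 else 0).sum +
    ∑ c ∈ W.toFinset.filter Even, single (c / 2) 1

theorem wordWt_eq_lettersWt (k : ℕ) (w : Fin k → ℕ) :
    wordWt k w = lettersWt (List.ofFn w) := by
  rw [wordWt, lettersWt, ← Fin.univ_val_map, Multiset.map_map]
  rfl

variable (P U : Multiset ℕ)

theorem filter_even_letters : (letters P U).filter Even = P.map (2 * ·) := by
  simp [letters, filter_add, filter_map]

theorem filter_odd_letters : (letters P U).filter Odd = U.map (2 * · + 1) := by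
  simp [letters, filter_add, filter_map]

theorem card_letters : card (letters P U) = card P + card U := by
  simp [letters]

theorem letters_injective : Function.Injective2 letters := by
  intro P P' U U' h
  constructor
  · have h' := congrArg (Multiset.filter Even) h
    rw [filter_even_letters, filter_even_letters] at h'
    exact map_injective (fun a b hab => by simpa using hab) h'
  · have h' := congrArg (Multiset.filter Odd) h
    rw [filter_odd_letters, filter_odd_letters] at h'
    exact map_injective (fun a b hab => by simpa using hab) h'

theorem letters_map_div_two_filter (W : Multiset ℕ) :
    letters ((W.filter Even).map (· / 2)) ((W.filter Odd).map (· / 2)) = W := by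
  rw [letters, Multiset.map_map, Multiset.map_map,
    map_congr rfl (f := (2 * ·) ∘ (· / 2)) (g := id)
      fun c hc => Nat.two_mul_div_two_of_even (mem_filter.mp hc).2,
    map_congr rfl (f := (2 * · + 1) ∘ (· / 2)) (g := id)
      fun c hc => Nat.two_mul_div_two_add_one_of_odd (mem_filter.mp hc).2,
    map_id, map_id]
  simpa only [Nat.not_even_iff_odd] using filter_add_not Even W

theorem lettersWt_letters :
    lettersWt (letters P U) = (U.map (single · 1)).sum + ∑ v ∈ P.toFinset, single v 1 := by
  rw [lettersWt, ← toFinset_filter, filter_even_letters, toFinset_map,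
    Finset.sum_image fun a _ b _ hab => by simpa using hab]
  simp [letters, Nat.odd_mul, Nat.mul_add_div, Nat.not_odd_iff_even.mpr even_two]

end Letters

section HookLetters

variable {b m : ℕ}

def hookLetters (r : Fin (b + 1) → ℕ) (c : Fin m → ℕ) : Multiset ℕ :=
  letters (List.ofFn (Fin.cons (r 0) c : Fin (m + 1) → ℕ)) (List.ofFn (Fin.tail r))

variable (r : Fin (b + 1) → ℕ) (c : Fin m → ℕ)

theorem card_hookLetters : Multiset.card (hookLetters r c) = b + 1 + m := by
  rw [hookLetters, card_letters, Multiset.coe_card, Multiset.coe_card, List.length_ofFn,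
    List.length_ofFn]
  omega

theorem card_filter_odd_hookLetters : Multiset.card ((hookLetters r c).filter Odd) = b := by
  simp [hookLetters, filter_odd_letters]

theorem mem_hookLetters {x : ℕ} :
    x ∈ hookLetters r c ↔
      x = 2 * r 0 ∨ (∃ j, x = 2 * c j) ∨ ∃ j : Fin b, x = 2 * r j.succ + 1 := by
  simp [hookLetters, letters, List.ofFn_succ, Fin.tail, eq_comm]

theorem hookWt_eq_lettersWt : hookWt (b + 1) m r c = lettersWt (hookLetters r c) := by
  rw [hookLetters, lettersWt_letters, hookWt]
  congr 1
  · simp [Fin.sum_univ_succ, Fin.tail, List.sum_ofFn]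
  · congr 1
    ext v
    simp [List.ofFn_succ, eq_comm, or_comm]

theorem hookLetters_lt_iff {n : ℕ} :
    (∀ x ∈ hookLetters r c, x < 2 * n) ↔ (∀ j, r j < n) ∧ ∀ j, c j < n := by
  constructor
  · intro h
    refine ⟨fun j => ?_, fun j => ?_⟩
    · cases j using Fin.cases with
      | zero => have := h _ ((mem_hookLetters r c).mpr (.inl rfl)); omega
      | succ j => have := h _ ((mem_hookLetters r c).mpr (.inr (.inr ⟨j, rfl⟩))); omega
    · have := h _ ((mem_hookLetters r c).mpr (.inr (.inl ⟨j, rfl⟩))); omega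
  · rintro ⟨hr, hc⟩ x hx
    rcases (mem_hookLetters r c).mp hx with rfl | ⟨j, rfl⟩ | ⟨j, rfl⟩
    · have := hr 0; omega
    · have := hc j; omega
    · have := hr j.succ; omega

theorem two_mul_mem_hookLetters : 2 * r 0 ∈ hookLetters r c :=
  (mem_hookLetters r c).mpr (.inl rfl)

variable {r c}

theorem two_mul_le_of_mem_hookLetters (hr : Monotone r)
    (hc : Monotone (Fin.cons (r 0) c : Fin (m + 1) → ℕ)) {x : ℕ} (hx : x ∈ hookLetters r c) :
    2 * r 0 ≤ x := by
  rcases (mem_hookLetters r c).mp hx with rfl | ⟨j, rfl⟩ | ⟨j, rfl⟩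
  · rfl
  · have := hc (Fin.zero_le j.succ)
    simp only [Fin.cons_zero, Fin.cons_succ] at this
    omega
  · have := hr (Fin.zero_le j.succ)
    omega

theorem hookLetters_injective {r' : Fin (b + 1) → ℕ} {c' : Fin m → ℕ}
    (hr : Monotone r) (hc : Monotone (Fin.cons (r 0) c : Fin (m + 1) → ℕ))
    (hr' : Monotone r') (hc' : Monotone (Fin.cons (r' 0) c' : Fin (m + 1) → ℕ))
    (h : hookLetters r c = hookLetters r' c') : r = r' ∧ c = c' := by
  obtain ⟨hcol, htail⟩ := letters_injective h
  obtain ⟨h0, rfl⟩ := Fin.cons_injective2 (hc.eq_of_coe_ofFn_eq hc' hcol)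
  refine ⟨?_, rfl⟩
  have tail_mono {s : Fin (b + 1) → ℕ} (hs : Monotone s) : Monotone (Fin.tail s) :=
    fun i j hij => hs (Fin.succ_le_succ_iff.mpr hij)
  rw [← Fin.cons_self_tail r, ← Fin.cons_self_tail r', h0,
    (tail_mono hr).eq_of_coe_ofFn_eq (tail_mono hr') htail]

theorem exists_hookLetters_eq {b m x : ℕ} {W : Multiset ℕ} (hW : Multiset.card W = b + 1 + m)
    (hodd : Multiset.card (W.filter Odd) = b) (hx : x ∈ W) (hxe : Even x)
    (hmin : ∀ y ∈ W, x ≤ y) :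
    ∃ (r : Fin (b + 1) → ℕ) (c : Fin m → ℕ),
      Monotone r ∧ Monotone (Fin.cons (r 0) c : Fin (m + 1) → ℕ) ∧ hookLetters r c = W := by
  set E := (W.filter Even).map (· / 2)
  set O := (W.filter Odd).map (· / 2)
  have hcard : Multiset.card E + Multiset.card O = b + 1 + m := by
    rw [← card_letters, letters_map_div_two_filter, hW]
  have hO : Multiset.card O = b := by simp [O, hodd]
  have hE : Multiset.card E = m + 1 := by omega
  set col := E.sortTuple hE
  set tl := O.sortTuple hO
  have hcol : Monotone col := E.monotone_sortTuple hE
  have hcol_le : col 0 ≤ x / 2 := hcol.apply_zero_le m.succ_pos <| by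
    rw [E.coe_ofFn_sortTuple hE]
    exact Multiset.mem_map_of_mem _ (Multiset.mem_filter.mpr ⟨hx, hxe⟩)
  refine ⟨Fin.cons (col 0) tl, Fin.tail col, ?_, ?_, ?_⟩
  · refine Fin.monotone_cons_iff.mpr ⟨fun i => hcol_le.trans ?_, O.monotone_sortTuple hO⟩
    obtain ⟨y, hy, hyi⟩ := Multiset.mem_map.mp (O.sortTuple_mem hO i)
    exact (Nat.div_le_div_right (hmin y (Multiset.mem_of_mem_filter hy))).trans_eq hyi
  · simpa only [Fin.cons_zero, Fin.cons_self_tail] using hcol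
  · rw [hookLetters, Fin.cons_zero, Fin.tail_cons, Fin.cons_self_tail, E.coe_ofFn_sortTuple,
      O.coe_ofFn_sortTuple, letters_map_div_two_filter]

end HookLetters

open Finset

def primedWords (k n : ℕ) (d : ℕ →₀ ℕ) : Finset (Fin k → Fin n) :=
  {w | Monotone w ∧ (∀ h : 0 < k, Even ((w ⟨0, h⟩ : ℕ))) ∧ wordWt k (fun i => (w i : ℕ)) = d}

def hookRPPs (a m n : ℕ) (d : ℕ →₀ ℕ) : Finset ((Fin a → Fin n) × (Fin m → Fin n)) :=
  {rc | Monotone rc.1 ∧ Monotone rc.2 ∧ (∀ (ha : 0 < a) (hm : 0 < m), rc.1 ⟨0, ha⟩ ≤ rc.2 ⟨0, hm⟩) ∧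
    hookWt a m (fun j => (rc.1 j : ℕ)) (fun j => (rc.2 j : ℕ)) = d}

theorem coeff_gpPoly (k : ℕ) (d : ℕ →₀ ℕ) :
    MvPowerSeries.coeff d (gpPoly k) = #(primedWords k (2 * d.support.sup id + 2) d) :=
  rfl

theorem coeff_ghook (a m : ℕ) (d : ℕ →₀ ℕ) :
    MvPowerSeries.coeff d (ghook a m) = #(hookRPPs a m (d.support.sup id + 1) d) :=
  rfl

theorem mem_hookRPPs {b m n : ℕ} {d : ℕ →₀ ℕ} {rc : (Fin (b + 1) → Fin n) × (Fin m → Fin n)} :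
    rc ∈ hookRPPs (b + 1) m n d ↔
      Monotone (fun j => (rc.1 j : ℕ)) ∧
      Monotone (Fin.cons (rc.1 0 : ℕ) (fun j => (rc.2 j : ℕ)) : Fin (m + 1) → ℕ) ∧
      lettersWt (hookLetters (fun j => (rc.1 j : ℕ)) (fun j => (rc.2 j : ℕ))) = d := by
  simp only [hookRPPs, mem_filter, mem_univ, true_and, ← hookWt_eq_lettersWt, Fin.monotone_cons_iff]
  constructor
  · rintro ⟨hr, hc, h0, hwt⟩
    exact ⟨hr, ⟨fun i => (h0 b.succ_pos i.pos).trans (hc (Nat.zero_le i.val)), hc⟩, hwt⟩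
  · rintro ⟨hr, ⟨h0, hc⟩, hwt⟩
    exact ⟨hr, hc, fun _ hm => h0 ⟨0, hm⟩, hwt⟩

def hookWord {b m k N : ℕ} (hk : b + 1 + m = k)
    (rc : (Fin (b + 1) → Fin (N + 1)) × (Fin m → Fin (N + 1))) : Fin k → Fin (2 * N + 2) :=
  fun i =>
    ⟨(hookLetters (fun j => (rc.1 j : ℕ)) (fun j => (rc.2 j : ℕ))).sortTuple
        ((card_hookLetters _ _).trans hk) i,
      (hookLetters_lt_iff _ _).mpr ⟨fun j => (rc.1 j).isLt, fun j => (rc.2 j).isLt⟩ _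
        (Multiset.sortTuple_mem _ _ i)⟩

theorem coe_ofFn_hookWord {b m k N : ℕ} (hk : b + 1 + m = k)
    (rc : (Fin (b + 1) → Fin (N + 1)) × (Fin m → Fin (N + 1))) :
    (List.ofFn (fun i => (hookWord hk rc i : ℕ)) : Multiset ℕ) =
      hookLetters (fun j => (rc.1 j : ℕ)) (fun j => (rc.2 j : ℕ)) :=
  Multiset.coe_ofFn_sortTuple _ ((card_hookLetters _ _).trans hk)

theorem monotone_hookWord {b m k N : ℕ} (hk : b + 1 + m = k)
    (rc : (Fin (b + 1) → Fin (N + 1)) × (Fin m → Fin (N + 1))) :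
    Monotone fun i => (hookWord hk rc i : ℕ) :=
  Multiset.monotone_sortTuple _ ((card_hookLetters _ _).trans hk)

theorem hookWord_mem {b m k N : ℕ} (hk : b + 1 + m = k) {d : ℕ →₀ ℕ}
    {rc : (Fin (b + 1) → Fin (N + 1)) × (Fin m → Fin (N + 1))}
    (hrc : rc ∈ hookRPPs (b + 1) m (N + 1) d) :
    hookWord hk rc ∈ primedWords k (2 * N + 2) d ∧ #{i | Odd (hookWord hk rc i : ℕ)} = b := by
  obtain ⟨hr, hc, hwt⟩ := mem_hookRPPs.mp hrc
  have hL := coe_ofFn_hookWord hk rc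
  have hw := monotone_hookWord hk rc
  have hk0 : 0 < k := by omega
  have h0 : (hookWord hk rc ⟨0, hk0⟩ : ℕ) = 2 * rc.1 0 := by
    refine le_antisymm (hw.apply_zero_le hk0 (hL ▸ two_mul_mem_hookLetters _ _)) ?_
    exact two_mul_le_of_mem_hookLetters hr hc (hL ▸ apply_mem_coe_ofFn _ _)
  refine ⟨mem_filter.mpr ⟨mem_univ _, hw, fun _ => h0 ▸ even_two_mul _, ?_⟩, ?_⟩
  · rw [wordWt_eq_lettersWt, hL, hwt]
  · rw [card_filter_univ_eq_card_filter_ofFn (fun i => (hookWord hk rc i : ℕ)) Odd, hL,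
      card_filter_odd_hookLetters]

theorem hookWord_injOn {b m k N : ℕ} (hk : b + 1 + m = k) (d : ℕ →₀ ℕ) :
    Set.InjOn (hookWord (N := N) hk) ↑(hookRPPs (b + 1) m (N + 1) d) := by
  intro rc hrc rc' hrc' h
  obtain ⟨hr, hc, -⟩ := mem_hookRPPs.mp hrc
  obtain ⟨hr', hc', -⟩ := mem_hookRPPs.mp hrc'
  have hL := coe_ofFn_hookWord hk rc
  rw [h, coe_ofFn_hookWord] at hL
  obtain ⟨h1, h2⟩ := hookLetters_injective hr' hc' hr hc hL
  exact Prod.ext (Fin.val_injective.comp_left h1.symm) (Fin.val_injective.comp_left h2.symm)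

theorem exists_hookWord_eq {b m k N : ℕ} (hk : b + 1 + m = k) {d : ℕ →₀ ℕ}
    {w : Fin k → Fin (2 * N + 2)} (hw : w ∈ primedWords k (2 * N + 2) d)
    (hodd : #{i | Odd (w i : ℕ)} = b) :
    ∃ rc ∈ hookRPPs (b + 1) m (N + 1) d, hookWord hk rc = w := by
  obtain ⟨-, hw, heven, hwt⟩ := mem_filter.mp hw
  have hk0 : 0 < k := by omega
  have hw' : Monotone fun i => (w i : ℕ) := hw
  have hW : Multiset.card (List.ofFn fun i => (w i : ℕ) : Multiset ℕ) = b + 1 + m := by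
    simp [hk]
  obtain ⟨r, c, hr, hc, hL⟩ := exists_hookLetters_eq hW
    (by rw [← card_filter_univ_eq_card_filter_ofFn, hodd]) (apply_mem_coe_ofFn _ _)
    (heven hk0) (fun y hy => hw'.apply_zero_le hk0 hy)
  obtain ⟨hrN, hcN⟩ := (hookLetters_lt_iff r c (n := N + 1)).mp fun x hx => by
    obtain ⟨i, rfl⟩ := List.mem_ofFn.mp (Multiset.mem_coe.mp (hL ▸ hx))
    have := (w i).isLt
    omega
  let rc : (Fin (b + 1) → Fin (N + 1)) × (Fin m → Fin (N + 1)) :=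
    (fun j => ⟨r j, hrN j⟩, fun j => ⟨c j, hcN j⟩)
  refine ⟨rc, mem_hookRPPs.mpr ⟨hr, hc, ?_⟩, ?_⟩
  · rw [← hwt, wordWt_eq_lettersWt, ← hL]
  · have key := (monotone_hookWord hk rc).eq_of_coe_ofFn_eq hw'
      ((coe_ofFn_hookWord hk rc).trans hL)
    funext i
    exact Fin.ext (congrFun key i)

theorem card_hookRPPs {b m k : ℕ} (hk : b + 1 + m = k) (N : ℕ) (d : ℕ →₀ ℕ) :
    #(hookRPPs (b + 1) m (N + 1) d) =
      #{w ∈ primedWords k (2 * N + 2) d | #{i | Odd (w i : ℕ)} = b} :=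
  card_nbij (hookWord hk) (fun _ hrc => mem_filter.mpr (hookWord_mem hk hrc))
    (hookWord_injOn hk d) fun _ hw =>
      exists_hookWord_eq hk (mem_filter.mp hw).1 (mem_filter.mp hw).2

theorem card_odd_lt_of_mem_primedWords {k n : ℕ} {d : ℕ →₀ ℕ} {w : Fin k → Fin n}
    (hw : w ∈ primedWords k n d) (hk : 0 < k) : #{i | Odd (w i : ℕ)} < k := by
  have heven : Even (w ⟨0, hk⟩ : ℕ) := (mem_filter.mp hw).2.2.1 hk
  calc #{i | Odd (w i : ℕ)} ≤ #(univ.erase (⟨0, hk⟩ : Fin k)) := by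
        refine card_le_card fun i hi => mem_erase.mpr ⟨?_, mem_univ i⟩
        rintro rfl
        exact Nat.not_even_iff_odd.mpr (mem_filter.mp hi).2 heven
    _ < k := by simp [hk]

/-- (Hook sum formula.)  For every `k ≥ 1`,
`gp_k(y) = ∑_{a=1}^{k} g_{(a,1^{k-a})}(y)`. -/
theorem hook_sum_formula (k : ℕ) (hk : 1 ≤ k) :
    gpPoly k = ∑ a ∈ Finset.Icc 1 k, ghook a (k - a) := by
  ext d
  simp only [map_sum, coeff_gpPoly, coeff_ghook]
  have hodd (w) (hw : w ∈ primedWords k (2 * d.support.sup id + 2) d) :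
      #{i | Odd (w i : ℕ)} + 1 ∈ Icc 1 k :=
    mem_Icc.mpr ⟨by omega, card_odd_lt_of_mem_primedWords hw hk⟩
  rw [card_eq_sum_card_fiberwise hodd]
  push_cast
  refine sum_congr rfl fun a ha => ?_
  obtain ⟨b, rfl⟩ : ∃ b, a = b + 1 := ⟨a - 1, by grind⟩
  rw [card_hookRPPs (show b + 1 + (k - (b + 1)) = k by grind)]
  simp only [add_left_inj]

end
end
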